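/- arXiv:gr-qc/0104091 — 2 statements merged into one kernel-verified Lean document; each statement's English description precedes it below -/
import Mathlib

section
/- Let R be a (0,4)-tensor on V with Riemann symmetries and B its Bel tensor. Then B is invariant under interchange of its two pairs of arguments: B_{αβλμ} = B_{λμαβ} for all indices (equivalently, B(x,y,z,w) = B(z,w,x,y) for all x,y,z,w ∈ V). -/
/-- A (0,4)-tensor (given in components w.r.t. a basis of the 4-dimensional
real vector space `V`) has the Riemann symmetries:
antisymmetry in the first pair, antisymmetry in the second pair,
symmetry under interchange of the two pairs, and the first Bianchi identity
`R_{α[βλμ]} = 0` (equivalent, given the other symmetries, to the cyclic identity). -/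
def RiemannSym (R : Fin 4 → Fin 4 → Fin 4 → Fin 4 → ℝ) : Prop :=
  (∀ α β lam μ, R α β lam μ = - R β α lam μ) ∧
  (∀ α β lam μ, R α β lam μ = - R α β μ lam) ∧
  (∀ α β lam μ, R α β lam μ = R lam μ α β) ∧
  (∀ α β lam μ, R α β lam μ + R α lam μ β + R α μ β lam = 0)

/-- The Bel tensor of a (0,4)-tensor `R`, built with the metric `g`
(with inverse metric `ginv` used to raise indices):
`B_{αβλμ} = R_{αρλσ}R_β{}^ρ{}_μ{}^σ + R_{αρμσ}R_β{}^ρ{}_λ{}^σ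
 − (1/2) g_{αβ} R_{ρτλσ}R^{ρτ}{}_μ{}^σ − (1/2) g_{λμ} R_{αρστ}R_β{}^{ρστ}
 + (1/8) g_{αβ} g_{λμ} R_{ρτσν}R^{ρτσν}`. -/
noncomputable def Bel (g ginv : Fin 4 → Fin 4 → ℝ) (R : Fin 4 → Fin 4 → Fin 4 → Fin 4 → ℝ)
    (α β lam μ : Fin 4) : ℝ :=
    (∑ ρ, ∑ σ, ∑ ρ', ∑ σ', R α ρ lam σ * ginv ρ ρ' * ginv σ σ' * R β ρ' μ σ')
  + (∑ ρ, ∑ σ, ∑ ρ', ∑ σ', R α ρ μ σ * ginv ρ ρ' * ginv σ σ' * R β ρ' lam σ')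
  - (1/2) * g α β * (∑ ρ, ∑ τ, ∑ σ, ∑ ρ', ∑ τ', ∑ σ',
      ginv ρ ρ' * ginv τ τ' * ginv σ σ' * R ρ τ lam σ * R ρ' τ' μ σ')
  - (1/2) * g lam μ * (∑ ρ, ∑ σ, ∑ τ, ∑ ρ', ∑ σ', ∑ τ',
      ginv ρ ρ' * ginv σ σ' * ginv τ τ' * R α ρ σ τ * R β ρ' σ' τ')
  + (1/8) * g α β * g lam μ * (∑ ρ, ∑ τ, ∑ σ, ∑ ν, ∑ ρ', ∑ τ', ∑ σ', ∑ ν',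
      ginv ρ ρ' * ginv τ τ' * ginv σ σ' * ginv ν ν' * R ρ τ σ ν * R ρ' τ' σ' ν')

lemma sum_swap4 (f : Fin 4 → Fin 4 → Fin 4 → Fin 4 → ℝ) :
    (∑ a, ∑ b, ∑ c, ∑ d, f b a d c) = ∑ a, ∑ b, ∑ c, ∑ d, f a b c d := by
  rw [Finset.sum_comm]
  exact Finset.sum_congr rfl fun _ _ => Finset.sum_congr rfl fun _ _ => Finset.sum_comm

lemma sum_swap4' (f : Fin 4 → Fin 4 → Fin 4 → Fin 4 → ℝ) :
    (∑ a, ∑ b, ∑ c, ∑ d, f c d a b) = ∑ a, ∑ b, ∑ c, ∑ d, f a b c d :=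
  calc (∑ a, ∑ b, ∑ c, ∑ d, f c d a b)
      = ∑ a, ∑ c, ∑ b, ∑ d, f c d a b :=
        Finset.sum_congr rfl fun _ _ => Finset.sum_comm
    _ = ∑ c, ∑ a, ∑ b, ∑ d, f c d a b := Finset.sum_comm
    _ = ∑ c, ∑ a, ∑ d, ∑ b, f c d a b :=
        Finset.sum_congr rfl fun _ _ => Finset.sum_congr rfl fun _ _ => Finset.sum_comm
    _ = ∑ c, ∑ d, ∑ a, ∑ b, f c d a b :=
        Finset.sum_congr rfl fun _ _ => Finset.sum_comm

lemma sum_cyc3 (f : Fin 4 → Fin 4 → Fin 4 → ℝ) :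
    (∑ a, ∑ b, ∑ c, f c a b) = ∑ a, ∑ b, ∑ c, f a b c := by
  rw [show (∑ a, ∑ b, ∑ c, f c a b) = ∑ a, ∑ c, ∑ b, f c a b from
      Finset.sum_congr rfl fun _ _ => Finset.sum_comm]
  exact Finset.sum_comm

lemma sum_cyc6 (H : Fin 4 → Fin 4 → Fin 4 → Fin 4 → Fin 4 → Fin 4 → ℝ) :
    (∑ a, ∑ b, ∑ c, ∑ d, ∑ e, ∑ f, H c a b f d e)
    = ∑ a, ∑ b, ∑ c, ∑ d, ∑ e, ∑ f, H a b c d e f := by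
  have h1 : (∑ a, ∑ b, ∑ c, ∑ d, ∑ e, ∑ f, H c a b f d e)
      = ∑ a, ∑ b, ∑ c, ∑ d, ∑ e, ∑ f, H c a b d e f :=
    Finset.sum_congr rfl fun a _ => Finset.sum_congr rfl fun b _ =>
      Finset.sum_congr rfl fun c _ => sum_cyc3 (fun d e f => H c a b d e f)
  rw [h1]
  exact sum_cyc3 (fun p q r => ∑ d, ∑ e, ∑ f, H p q r d e f)

/-- Pair-interchange symmetry of the basic double contraction. -/
lemma T1_pairsym (ginv : Fin 4 → Fin 4 → ℝ) (R : Fin 4 → Fin 4 → Fin 4 → Fin 4 → ℝ)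
    (hpair : ∀ α β lam μ, R α β lam μ = R lam μ α β) (a b c d : Fin 4) :
    (∑ ρ, ∑ σ, ∑ ρ', ∑ σ', R c ρ a σ * ginv ρ ρ' * ginv σ σ' * R d ρ' b σ')
    = ∑ ρ, ∑ σ, ∑ ρ', ∑ σ', R a ρ c σ * ginv ρ ρ' * ginv σ σ' * R b ρ' d σ' := by
  have h : (∑ ρ, ∑ σ, ∑ ρ', ∑ σ', R c ρ a σ * ginv ρ ρ' * ginv σ σ' * R d ρ' b σ')
      = ∑ ρ, ∑ σ, ∑ ρ', ∑ σ',
        (fun p q r s => R a p c q * ginv p r * ginv q s * R b r d s) σ ρ σ' ρ' := by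
    refine Finset.sum_congr rfl fun ρ _ => Finset.sum_congr rfl fun σ _ =>
      Finset.sum_congr rfl fun ρ' _ => Finset.sum_congr rfl fun σ' _ => ?_
    simp only
    rw [hpair c ρ a σ, hpair d ρ' b σ']
    ring
  rw [h]
  exact sum_swap4 _

/-- Swapping the two factors of the basic double contraction. -/
lemma T1_swap (ginv : Fin 4 → Fin 4 → ℝ) (R : Fin 4 → Fin 4 → Fin 4 → Fin 4 → ℝ)
    (hgi : ∀ i j, ginv i j = ginv j i) (a b c d : Fin 4) :
    (∑ ρ, ∑ σ, ∑ ρ', ∑ σ', R b ρ d σ * ginv ρ ρ' * ginv σ σ' * R a ρ' c σ')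
    = ∑ ρ, ∑ σ, ∑ ρ', ∑ σ', R a ρ c σ * ginv ρ ρ' * ginv σ σ' * R b ρ' d σ' := by
  have h : (∑ ρ, ∑ σ, ∑ ρ', ∑ σ', R b ρ d σ * ginv ρ ρ' * ginv σ σ' * R a ρ' c σ')
      = ∑ ρ, ∑ σ, ∑ ρ', ∑ σ',
        (fun p q r s => R a p c q * ginv p r * ginv q s * R b r d s) ρ' σ' ρ σ := by
    refine Finset.sum_congr rfl fun ρ _ => Finset.sum_congr rfl fun σ _ =>
      Finset.sum_congr rfl fun ρ' _ => Finset.sum_congr rfl fun σ' _ => ?_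
    simp only
    rw [hgi ρ' ρ, hgi σ' σ]
    ring
  rw [h]
  exact sum_swap4' _

/-- The two fully-contracted "square" quantities agree. -/
lemma S3_eq_S4 (ginv : Fin 4 → Fin 4 → ℝ) (R : Fin 4 → Fin 4 → Fin 4 → Fin 4 → ℝ)
    (hpair : ∀ α β lam μ, R α β lam μ = R lam μ α β) (x y : Fin 4) :
    (∑ ρ, ∑ τ, ∑ σ, ∑ ρ', ∑ τ', ∑ σ',
      ginv ρ ρ' * ginv τ τ' * ginv σ σ' * R ρ τ x σ * R ρ' τ' y σ')
    = ∑ ρ, ∑ σ, ∑ τ, ∑ ρ', ∑ σ', ∑ τ',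
      ginv ρ ρ' * ginv σ σ' * ginv τ τ' * R x ρ σ τ * R y ρ' σ' τ' := by
  have h : (∑ ρ, ∑ τ, ∑ σ, ∑ ρ', ∑ τ', ∑ σ',
      ginv ρ ρ' * ginv τ τ' * ginv σ σ' * R ρ τ x σ * R ρ' τ' y σ')
      = ∑ ρ, ∑ τ, ∑ σ, ∑ ρ', ∑ τ', ∑ σ',
        (fun p q r p' q' r' => ginv p p' * ginv q q' * ginv r r' * R x p q r * R y p' q' r')
          σ ρ τ σ' ρ' τ' := by
    refine Finset.sum_congr rfl fun ρ _ => Finset.sum_congr rfl fun τ _ =>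
      Finset.sum_congr rfl fun σ _ => Finset.sum_congr rfl fun ρ' _ =>
      Finset.sum_congr rfl fun τ' _ => Finset.sum_congr rfl fun σ' _ => ?_
    simp only
    rw [hpair ρ τ x σ, hpair ρ' τ' y σ']
    ring
  rw [h]
  exact sum_cyc6 _

/-- if `R` has the Riemann symmetries, its Bel tensor is invariant
under interchange of its two pairs of arguments: `B_{αβλμ} = B_{λμαβ}`. -/
theorem bel_symm_pair_interchange
    (g ginv : Fin 4 → Fin 4 → ℝ)
    (hgsymm : ∀ μ ν, g μ ν = g ν μ)
    (hginv : ∀ μ ν, (∑ ρ, g μ ρ * ginv ρ ν) = if μ = ν then 1 else 0)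
    (R : Fin 4 → Fin 4 → Fin 4 → Fin 4 → ℝ)
    (hR : RiemannSym R) :
    ∀ α β lam μ, Bel g ginv R α β lam μ = Bel g ginv R lam μ α β := by
  obtain ⟨-, -, hpair, -⟩ := hR
  -- `ginv` is symmetric, since it is the (two-sided) inverse of the symmetric matrix `g`.
  have hgi : ∀ i j, ginv i j = ginv j i := by
    set G : Matrix (Fin 4) (Fin 4) ℝ := Matrix.of g with hG
    set Gi : Matrix (Fin 4) (Fin 4) ℝ := Matrix.of ginv with hGi
    have hGG : G * Gi = 1 := by
      ext i j
      simpa [Matrix.mul_apply, G, Gi, Matrix.one_apply] using hginv i j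
    have hGt : Matrix.transpose G = G := by
      ext i j
      exact hgsymm j i
    have h1 : Matrix.transpose Gi * G = 1 := by
      have h := congrArg Matrix.transpose hGG
      rw [Matrix.transpose_mul, hGt] at h
      simpa using h
    have h2 : Matrix.transpose Gi = Gi := by
      calc Matrix.transpose Gi = Matrix.transpose Gi * (G * Gi) := by rw [hGG, mul_one]
        _ = (Matrix.transpose Gi * G) * Gi := by rw [mul_assoc]
        _ = Gi := by rw [h1, one_mul]
    intro i j
    have := congrFun (congrFun h2 j) i
    simpa [Matrix.transpose_apply, G, Gi] using this
  intro α β lam μ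
  unfold Bel
  rw [T1_pairsym ginv R hpair α β lam μ,
      T1_pairsym ginv R hpair β α lam μ,
      T1_swap ginv R hgi α β μ lam,
      S3_eq_S4 ginv R hpair α β,
      S3_eq_S4 ginv R hpair lam μ]
  ring
end

section
/- On Minkowski ℝ⁴, let B be a smooth (0,4)-tensor field satisfying at every point the symmetries B_{αβλμ} = B_{(αβ)(λμ)} = B_{λμαβ}, and let ξ₁, ξ₂, ξ₃ be Killing vector fields of η. Define the current j_μ = B_{(αβλ)μ} ξ₁^α ξ₂^β ξ₃^λ. Then at every point ∂^μ j_μ = (∂^μ B_{(αβλμ)}) ξ₁^α ξ₂^β ξ₃^λ, i.e. the divergence of the current equals the contraction of the divergence of the fully symmetrized tensor with the three Killing vectors. -/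
noncomputable section

/-- The `ν`-th coordinate vector of ℝ⁴. -/
def coordV (ν : Fin 4) : Fin 4 → ℝ := Pi.single ν 1

/-- The coordinate partial derivative `∂_ν f` at `p`. -/
def pd (ν : Fin 4) (f : (Fin 4 → ℝ) → ℝ) (p : Fin 4 → ℝ) : ℝ :=
  fderiv ℝ f p (coordV ν)

/-- The Minkowski metric `η = diag(1, −1, −1, −1)` on ℝ⁴ (its own inverse,
so it is also used to raise indices). -/
def mink (μ ν : Fin 4) : ℝ := if μ = ν then (if μ = 0 then 1 else -1) else 0

/-- The index of `ξ` lowered with the Minkowski metric: `ξ_β = η_{βρ} ξ^ρ`. -/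
def lowerIdx (ξ : (Fin 4 → ℝ) → Fin 4 → ℝ) (q : Fin 4 → ℝ) (β : Fin 4) : ℝ :=
  ∑ ρ, mink β ρ * ξ q ρ

/-- `ξ` is a Killing vector field of the Minkowski metric:
`∂_α ξ_β + ∂_β ξ_α = 0` everywhere. -/
def IsKilling (ξ : (Fin 4 → ℝ) → Fin 4 → ℝ) : Prop :=
  ∀ p α β, pd α (fun q => lowerIdx ξ q β) p + pd β (fun q => lowerIdx ξ q α) p = 0

/-- The current `j_μ = B_{(αβλ)μ} ξ₁^α ξ₂^β ξ₃^λ` built from a (0,4)-tensor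
field `B` (symmetrized over its first three indices) and three vector fields. -/
def current (B : (Fin 4 → ℝ) → Fin 4 → Fin 4 → Fin 4 → Fin 4 → ℝ)
    (ξ₁ ξ₂ ξ₃ : (Fin 4 → ℝ) → Fin 4 → ℝ) (q : Fin 4 → ℝ) (μ : Fin 4) : ℝ :=
  ∑ α, ∑ β, ∑ lam,
    ((1/6 : ℝ) * ∑ σ : Equiv.Perm (Fin 3),
        B q (![α, β, lam] (σ 0)) (![α, β, lam] (σ 1)) (![α, β, lam] (σ 2)) μ)
      * ξ₁ q α * ξ₂ q β * ξ₃ q lam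

-- generic helper lemmas
lemma mink_sq (i : Fin 4) : mink i i * mink i i = 1 := by
  rcases eq_or_ne i 0 with h | h <;> simp [mink, h]

lemma mink_diag_sum (μ : Fin 4) (f : Fin 4 → ℝ) :
    ∑ ν, mink μ ν * f ν = mink μ μ * f μ := by
  refine Finset.sum_eq_single μ (fun ν _ hν => ?_) (by simp)
  have : ¬ μ = ν := fun h => hν h.symm
  rw [mink, if_neg this, zero_mul]

lemma pd_sum {ι : Type*} (s : Finset ι) (f : ι → (Fin 4 → ℝ) → ℝ) (ν : Fin 4)
    (p : Fin 4 → ℝ) (hf : ∀ i ∈ s, DifferentiableAt ℝ (f i) p) :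
    pd ν (fun q => ∑ i ∈ s, f i q) p = ∑ i ∈ s, pd ν (f i) p := by
  unfold pd
  rw [fderiv_fun_sum hf]
  simp

lemma pd_const_mul (c : ℝ) (f : (Fin 4 → ℝ) → ℝ) (ν : Fin 4) (p : Fin 4 → ℝ)
    (hf : DifferentiableAt ℝ f p) :
    pd ν (fun q => c * f q) p = c * pd ν f p := by
  unfold pd
  rw [fderiv_const_mul hf]
  simp

lemma pd_mul4 (f g h k : (Fin 4 → ℝ) → ℝ) (ν : Fin 4) (p : Fin 4 → ℝ)
    (hf : DifferentiableAt ℝ f p) (hg : DifferentiableAt ℝ g p)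
    (hh : DifferentiableAt ℝ h p) (hk : DifferentiableAt ℝ k p) :
    pd ν (fun q => f q * g q * h q * k q) p
      = pd ν f p * g p * h p * k p + f p * pd ν g p * h p * k p
        + f p * g p * pd ν h p * k p + f p * g p * h p * pd ν k p := by
  have H : HasFDerivAt (fun q => f q * g q * h q * k q)
      ((f p * g p * h p) • fderiv ℝ k p + k p •
        ((f p * g p) • fderiv ℝ h p + h p •
          (f p • fderiv ℝ g p + g p • fderiv ℝ f p))) p :=
    ((hf.hasFDerivAt.mul hg.hasFDerivAt).mul hh.hasFDerivAt).mul hk.hasFDerivAt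
  unfold pd
  rw [H.fderiv]
  simp only [ContinuousLinearMap.add_apply, ContinuousLinearMap.smul_apply, smul_eq_mul]
  ring

lemma sum_comm4 (f : Fin 4 → Fin 4 → Fin 4 → Fin 4 → ℝ) :
    ∑ μ, ∑ a, ∑ b, ∑ c, f μ a b c = ∑ a, ∑ b, ∑ c, ∑ μ, f μ a b c :=
  calc ∑ μ, ∑ a, ∑ b, ∑ c, f μ a b c = ∑ a, ∑ μ, ∑ b, ∑ c, f μ a b c := Finset.sum_comm
  _ = ∑ a, ∑ b, ∑ μ, ∑ c, f μ a b c := Finset.sum_congr rfl fun a _ => Finset.sum_comm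
  _ = ∑ a, ∑ b, ∑ c, ∑ μ, f μ a b c :=
      Finset.sum_congr rfl fun a _ => Finset.sum_congr rfl fun b _ => Finset.sum_comm

lemma sum_rot3 (f : Fin 4 → Fin 4 → Fin 4 → ℝ) :
    ∑ a, ∑ b, ∑ c, f a b c = ∑ c, ∑ a, ∑ b, f a b c :=
  (Finset.sum_congr rfl fun a _ => Finset.sum_comm).trans Finset.sum_comm

lemma killing_cancel (T A : Fin 4 → Fin 4 → ℝ) (hT : ∀ m a, T m a = T a m)
    (hA : ∀ i j, mink j j * A i j + mink i i * A j i = 0) :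
    (∑ μ, ∑ α, mink μ μ * T μ α * A μ α) = 0 := by
  have h0 : (∑ μ, ∑ α, mink μ μ * T μ α * A μ α)
      = ∑ μ, ∑ α, mink α α * T α μ * A α μ := Finset.sum_comm
  have h2 : (∑ μ, ∑ α, mink μ μ * T μ α * A μ α)
      + (∑ μ, ∑ α, mink μ μ * T μ α * A μ α) = 0 := by
    calc (∑ μ, ∑ α, mink μ μ * T μ α * A μ α)
        + (∑ μ, ∑ α, mink μ μ * T μ α * A μ α)
        = (∑ μ, ∑ α, mink μ μ * T μ α * A μ α)
          + (∑ μ, ∑ α, mink α α * T α μ * A α μ) :=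
          congrArg (HAdd.hAdd _) h0
      _ = ∑ μ, ∑ α, (mink μ μ * T μ α * A μ α + mink α α * T α μ * A α μ) := by
          simp only [← Finset.sum_add_distrib]
      _ = 0 := by
          refine Finset.sum_eq_zero fun μ _ => Finset.sum_eq_zero fun α _ => ?_
          rw [hT α μ]
          have h := hA μ α
          have s1 := mink_sq μ
          have s2 := mink_sq α
          linear_combination (T μ α * mink μ μ * mink α α) * h
            + (- T μ α * mink μ μ * A μ α) * s2 + (- T μ α * mink α α * A α μ) * s1
  linarith

def symB (B : (Fin 4 → ℝ) → Fin 4 → Fin 4 → Fin 4 → Fin 4 → ℝ) (q : Fin 4 → ℝ)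
    (a b c d : Fin 4) : ℝ :=
  (1/24 : ℝ) * ∑ σ : Equiv.Perm (Fin 4),
    B q (![a, b, c, d] (σ 0)) (![a, b, c, d] (σ 1)) (![a, b, c, d] (σ 2)) (![a, b, c, d] (σ 3))

lemma symB_def (B : (Fin 4 → ℝ) → Fin 4 → Fin 4 → Fin 4 → Fin 4 → ℝ) (q : Fin 4 → ℝ)
    (a b c d : Fin 4) :
    (1/24 : ℝ) * (∑ σ : Equiv.Perm (Fin 4),
      B q (![a, b, c, d] (σ 0)) (![a, b, c, d] (σ 1)) (![a, b, c, d] (σ 2)) (![a, b, c, d] (σ 3)))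
      = symB B q a b c d := rfl

lemma perm3B (C : Fin 4 → Fin 4 → Fin 4 → Fin 4 → ℝ) (a b c d : Fin 4) :
    (∑ σ : Equiv.Perm (Fin 3), C (![a, b, c] (σ 0)) (![a, b, c] (σ 1)) (![a, b, c] (σ 2)) d)
      = C a b c d + C a c b d + C b a c d + C b c a d + C c a b d + C c b a d := by
  rw [show (Finset.univ : Finset (Equiv.Perm (Fin 3))) = {1, Equiv.swap 1 2, Equiv.swap 0 1, Equiv.swap 0 1 * Equiv.swap 1 2, Equiv.swap 0 2 * Equiv.swap 1 2, Equiv.swap 0 2} by decide]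
  repeat rw [Finset.sum_insert (by decide)]
  rw [Finset.sum_singleton]
  simp [Equiv.swap_apply_def]
  ring

lemma perm4B (C : Fin 4 → Fin 4 → Fin 4 → Fin 4 → ℝ) (a b c d : Fin 4) :
    (∑ σ : Equiv.Perm (Fin 4),
      C (![a, b, c, d] (σ 0)) (![a, b, c, d] (σ 1)) (![a, b, c, d] (σ 2)) (![a, b, c, d] (σ 3)))
      = C a b c d + C a b d c + C a c b d + C a c d b + C a d b c + C a d c b + C b a c d + C b a d c + C b c a d + C b c d a + C b d a c + C b d c a + C c a b d + C c a d b + C c b a d + C c b d a + C c d a b + C c d b a + C d a b c + C d a c b + C d b a c + C d b c a + C d c a b + C d c b a := by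
  rw [show (Finset.univ : Finset (Equiv.Perm (Fin 4))) = {1, Equiv.swap 2 3, Equiv.swap 1 2, Equiv.swap 1 2 * Equiv.swap 2 3, Equiv.swap 1 3 * Equiv.swap 2 3, Equiv.swap 1 3, Equiv.swap 0 1, Equiv.swap 0 1 * Equiv.swap 2 3, Equiv.swap 0 1 * Equiv.swap 1 2, Equiv.swap 0 1 * Equiv.swap 1 2 * Equiv.swap 2 3, Equiv.swap 0 1 * Equiv.swap 1 3 * Equiv.swap 2 3, Equiv.swap 0 1 * Equiv.swap 1 3, Equiv.swap 0 2 * Equiv.swap 1 2, Equiv.swap 0 2 * Equiv.swap 1 2 * Equiv.swap 2 3, Equiv.swap 0 2, Equiv.swap 0 2 * Equiv.swap 2 3, Equiv.swap 0 2 * Equiv.swap 1 3, Equiv.swap 0 2 * Equiv.swap 1 3 * Equiv.swap 2 3, Equiv.swap 0 3 * Equiv.swap 1 3 * Equiv.swap 2 3, Equiv.swap 0 3 * Equiv.swap 1 3, Equiv.swap 0 3 * Equiv.swap 2 3, Equiv.swap 0 3, Equiv.swap 0 3 * Equiv.swap 1 2 * Equiv.swap 2 3, Equiv.swap 0 3 *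 Equiv.swap 1 2} by decide]
  repeat rw [Finset.sum_insert (by decide)]
  rw [Finset.sum_singleton]
  simp [Equiv.swap_apply_def]
  ring

lemma sym3_eq_sym4 (B : (Fin 4 → ℝ) → Fin 4 → Fin 4 → Fin 4 → Fin 4 → ℝ)
    (hBpair1 : ∀ p α β lam μ, B p α β lam μ = B p β α lam μ)
    (hBpair2 : ∀ p α β lam μ, B p α β lam μ = B p α β μ lam)
    (hBexch : ∀ p α β lam μ, B p α β lam μ = B p lam μ α β)
    (q : Fin 4 → ℝ) (a b c d : Fin 4) :
    ((1/6 : ℝ) * ∑ σ : Equiv.Perm (Fin 3),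
        B q (![a, b, c] (σ 0)) (![a, b, c] (σ 1)) (![a, b, c] (σ 2)) d)
      = symB B q a b c d := by
  unfold symB
  rw [perm3B (B q) a b c d, perm4B (B q) a b c d]
  have habdc : B q a b d c = B q a b c d := (hBpair2 q a b d c)
  have hacdb : B q a c d b = B q a c b d := (hBpair2 q a c d b)
  have hadbc : B q a d b c = B q b c a d := (hBexch q a d b c)
  have hadcb : B q a d c b = B q b c a d := ((hBpair2 q a d c b).trans (hBexch q a d b c))
  have hbacd : B q b a c d = B q a b c d := (hBpair1 q b a c d)
  have hbadc : B q b a d c = B q a b c d := ((hBpair1 q b a d c).trans (hBpair2 q a b d c))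
  have hbcda : B q b c d a = B q b c a d := (hBpair2 q b c d a)
  have hbdac : B q b d a c = B q a c b d := (hBexch q b d a c)
  have hbdca : B q b d c a = B q a c b d := ((hBpair2 q b d c a).trans (hBexch q b d a c))
  have hcabd : B q c a b d = B q a c b d := (hBpair1 q c a b d)
  have hcadb : B q c a d b = B q a c b d := ((hBpair1 q c a d b).trans (hBpair2 q a c d b))
  have hcbad : B q c b a d = B q b c a d := (hBpair1 q c b a d)
  have hcbda : B q c b d a = B q b c a d := ((hBpair1 q c b d a).trans (hBpair2 q b c d a))
  have hcdab : B q c d a b = B q a b c d := (hBexch q c d a b)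
  have hcdba : B q c d b a = B q a b c d := ((hBpair2 q c d b a).trans (hBexch q c d a b))
  have hdabc : B q d a b c = B q b c a d := ((hBpair1 q d a b c).trans (hBexch q a d b c))
  have hdacb : B q d a c b = B q b c a d := ((hBpair1 q d a c b).trans ((hBpair2 q a d c b).trans (hBexch q a d b c)))
  have hdbac : B q d b a c = B q a c b d := ((hBpair1 q d b a c).trans (hBexch q b d a c))
  have hdbca : B q d b c a = B q a c b d := ((hBpair1 q d b c a).trans ((hBpair2 q b d c a).trans (hBexch q b d a c)))
  have hdcab : B q d c a b = B q a b c d := ((hBpair1 q d c a b).trans (hBexch q c d a b))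
  have hdcba : B q d c b a = B q a b c d := ((hBpair1 q d c b a).trans ((hBpair2 q c d b a).trans (hBexch q c d a b)))
  rw [habdc, hacdb, hadbc, hadcb, hbacd, hbadc, hbcda, hbdac, hbdca, hcabd, hcadb, hcbad, hcbda, hcdab, hcdba, hdabc, hdacb, hdbac, hdbca, hdcab, hdcba]
  ring
lemma symB_comp (B : (Fin 4 → ℝ) → Fin 4 → Fin 4 → Fin 4 → Fin 4 → ℝ) (q : Fin 4 → ℝ)
    (v : Fin 4 → Fin 4) (τ : Equiv.Perm (Fin 4)) :
    (∑ σ : Equiv.Perm (Fin 4), B q (v (τ (σ 0))) (v (τ (σ 1))) (v (τ (σ 2))) (v (τ (σ 3))))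
      = ∑ σ : Equiv.Perm (Fin 4), B q (v (σ 0)) (v (σ 1)) (v (σ 2)) (v (σ 3)) := by
  refine Fintype.sum_equiv (Equiv.mulLeft τ) _ _ fun σ => ?_
  simp [Equiv.Perm.mul_apply]

lemma symB_swap03 (B : (Fin 4 → ℝ) → Fin 4 → Fin 4 → Fin 4 → Fin 4 → ℝ) (q : Fin 4 → ℝ)
    (a b c d : Fin 4) : symB B q a b c d = symB B q d b c a := by
  unfold symB
  congr 1
  symm
  have hv : ∀ i, (![d, b, c, a] : Fin 4 → Fin 4) i = ![a, b, c, d] (Equiv.swap 0 3 i) := by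
    intro i; fin_cases i <;> simp [Equiv.swap_apply_def]
  simp only [hv]
  exact symB_comp B q ![a, b, c, d] (Equiv.swap 0 3)

lemma symB_swap13 (B : (Fin 4 → ℝ) → Fin 4 → Fin 4 → Fin 4 → Fin 4 → ℝ) (q : Fin 4 → ℝ)
    (a b c d : Fin 4) : symB B q a b c d = symB B q a d c b := by
  unfold symB
  congr 1
  symm
  have hv : ∀ i, (![a, d, c, b] : Fin 4 → Fin 4) i = ![a, b, c, d] (Equiv.swap 1 3 i) := by
    intro i; fin_cases i <;> simp [Equiv.swap_apply_def]
  simp only [hv]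
  exact symB_comp B q ![a, b, c, d] (Equiv.swap 1 3)

lemma symB_swap23 (B : (Fin 4 → ℝ) → Fin 4 → Fin 4 → Fin 4 → Fin 4 → ℝ) (q : Fin 4 → ℝ)
    (a b c d : Fin 4) : symB B q a b c d = symB B q a b d c := by
  unfold symB
  congr 1
  symm
  have hv : ∀ i, (![a, b, d, c] : Fin 4 → Fin 4) i = ![a, b, c, d] (Equiv.swap 2 3 i) := by
    intro i; fin_cases i <;> simp [Equiv.swap_apply_def]
  simp only [hv]
  exact symB_comp B q ![a, b, c, d] (Equiv.swap 2 3)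

/-- on Minkowski ℝ⁴, for a smooth (0,4)-tensor field `B` with the
symmetries `B_{αβλμ} = B_{(αβ)(λμ)} = B_{λμαβ}` and Killing vector fields
`ξ₁, ξ₂, ξ₃`, the divergence `∂^μ j_μ` of the current
`j_μ = B_{(αβλ)μ} ξ₁^α ξ₂^β ξ₃^λ` equals `(∂^μ B_{(αβλμ)}) ξ₁^α ξ₂^β ξ₃^λ`,
the contraction of the divergence of the fully symmetrized tensor with the
three Killing vectors. -/
theorem divergence_of_current
    (B : (Fin 4 → ℝ) → Fin 4 → Fin 4 → Fin 4 → Fin 4 → ℝ)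
    (hBsmooth : ∀ α β lam μ, ContDiff ℝ (⊤ : ℕ∞) fun p => B p α β lam μ)
    (hBpair1 : ∀ p α β lam μ, B p α β lam μ = B p β α lam μ)
    (hBpair2 : ∀ p α β lam μ, B p α β lam μ = B p α β μ lam)
    (hBexch : ∀ p α β lam μ, B p α β lam μ = B p lam μ α β)
    (ξ₁ ξ₂ ξ₃ : (Fin 4 → ℝ) → Fin 4 → ℝ)
    (hξ₁smooth : ∀ α, ContDiff ℝ (⊤ : ℕ∞) fun p => ξ₁ p α)
    (hξ₂smooth : ∀ α, ContDiff ℝ (⊤ : ℕ∞) fun p => ξ₂ p α)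
    (hξ₃smooth : ∀ α, ContDiff ℝ (⊤ : ℕ∞) fun p => ξ₃ p α)
    (hK₁ : IsKilling ξ₁) (hK₂ : IsKilling ξ₂) (hK₃ : IsKilling ξ₃) :
    ∀ p, (∑ μ, ∑ ν, mink μ ν * pd ν (fun q => current B ξ₁ ξ₂ ξ₃ q μ) p)
      = ∑ α, ∑ β, ∑ lam,
          (∑ μ, ∑ ν, mink μ ν * pd ν (fun q =>
              (1/24 : ℝ) * ∑ σ : Equiv.Perm (Fin 4),
                B q (![α, β, lam, μ] (σ 0)) (![α, β, lam, μ] (σ 1))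
                  (![α, β, lam, μ] (σ 2)) (![α, β, lam, μ] (σ 3))) p)
            * ξ₁ p α * ξ₂ p β * ξ₃ p lam := by
  intro p
  -- differentiability helpers
  have hBd : ∀ (a b c d : Fin 4) (x : Fin 4 → ℝ), DifferentiableAt ℝ (fun q => B q a b c d) x :=
    fun a b c d x => ((hBsmooth a b c d).differentiable (by simp)) x
  have hsymBd : ∀ (a b c d : Fin 4) (x : Fin 4 → ℝ),
      DifferentiableAt ℝ (fun q => symB B q a b c d) x := by
    intro a b c d x
    exact DifferentiableAt.const_mul (DifferentiableAt.fun_sum fun σ _ => hBd _ _ _ _ x) _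
  have hξ₁d : ∀ (a : Fin 4) (x : Fin 4 → ℝ), DifferentiableAt ℝ (fun q => ξ₁ q a) x :=
    fun a x => ((hξ₁smooth a).differentiable (by simp)) x
  have hξ₂d : ∀ (a : Fin 4) (x : Fin 4 → ℝ), DifferentiableAt ℝ (fun q => ξ₂ q a) x :=
    fun a x => ((hξ₂smooth a).differentiable (by simp)) x
  have hξ₃d : ∀ (a : Fin 4) (x : Fin 4 → ℝ), DifferentiableAt ℝ (fun q => ξ₃ q a) x :=
    fun a x => ((hξ₃smooth a).differentiable (by simp)) x
  have htermd : ∀ (a b c μ : Fin 4),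
      DifferentiableAt ℝ (fun q => symB B q a b c μ * ξ₁ q a * ξ₂ q b * ξ₃ q c) p :=
    fun a b c μ => (((hsymBd a b c μ p).mul (hξ₁d a p)).mul (hξ₂d b p)).mul (hξ₃d c p)
  -- Killing relations for raised-index derivatives
  have hlow : ∀ (ξ : (Fin 4 → ℝ) → Fin 4 → ℝ), (∀ a, ContDiff ℝ (⊤ : ℕ∞) fun q => ξ q a) → ∀ i j : Fin 4,
      pd i (fun q => lowerIdx ξ q j) p = mink j j * pd i (fun q => ξ q j) p := by
    intro ξ hs i j
    calc pd i (fun q => lowerIdx ξ q j) p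
        = ∑ ρ, pd i (fun q => mink j ρ * ξ q ρ) p :=
          pd_sum Finset.univ (fun ρ => fun q => mink j ρ * ξ q ρ) i p
            (fun ρ _ => (((hs ρ).differentiable (by simp)) p).const_mul _)
      _ = ∑ ρ, mink j ρ * pd i (fun q => ξ q ρ) p :=
          Finset.sum_congr rfl fun ρ _ =>
            pd_const_mul _ _ _ _ (((hs ρ).differentiable (by simp)) p)
      _ = mink j j * pd i (fun q => ξ q j) p := mink_diag_sum _ _
  have hA₁ : ∀ i j : Fin 4,
      mink j j * pd i (fun q => ξ₁ q j) p + mink i i * pd j (fun q => ξ₁ q i) p = 0 := by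
    intro i j
    have h := hK₁ p i j
    rwa [hlow ξ₁ hξ₁smooth i j, hlow ξ₁ hξ₁smooth j i] at h
  have hA₂ : ∀ i j : Fin 4,
      mink j j * pd i (fun q => ξ₂ q j) p + mink i i * pd j (fun q => ξ₂ q i) p = 0 := by
    intro i j
    have h := hK₂ p i j
    rwa [hlow ξ₂ hξ₂smooth i j, hlow ξ₂ hξ₂smooth j i] at h
  have hA₃ : ∀ i j : Fin 4,
      mink j j * pd i (fun q => ξ₃ q j) p + mink i i * pd j (fun q => ξ₃ q i) p = 0 := by
    intro i j
    have h := hK₃ p i j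
    rwa [hlow ξ₃ hξ₃smooth i j, hlow ξ₃ hξ₃smooth j i] at h
  -- rewrite the current with the fully symmetrized tensor
  have hcur : ∀ μ : Fin 4, (fun q => current B ξ₁ ξ₂ ξ₃ q μ)
      = fun q => ∑ a, ∑ b, ∑ c, symB B q a b c μ * ξ₁ q a * ξ₂ q b * ξ₃ q c := by
    intro μ; funext q
    unfold current
    refine Finset.sum_congr rfl fun a _ => Finset.sum_congr rfl fun b _ =>
      Finset.sum_congr rfl fun c _ => ?_
    rw [sym3_eq_sym4 B hBpair1 hBpair2 hBexch q a b c μ]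
  -- expand the derivative of the current
  have hpd : ∀ μ ν : Fin 4,
      pd ν (fun q => ∑ a, ∑ b, ∑ c, symB B q a b c μ * ξ₁ q a * ξ₂ q b * ξ₃ q c) p
      = ∑ a, ∑ b, ∑ c,
          (pd ν (fun q => symB B q a b c μ) p * ξ₁ p a * ξ₂ p b * ξ₃ p c
           + symB B p a b c μ * pd ν (fun q => ξ₁ q a) p * ξ₂ p b * ξ₃ p c
           + symB B p a b c μ * ξ₁ p a * pd ν (fun q => ξ₂ q b) p * ξ₃ p c
           + symB B p a b c μ * ξ₁ p a * ξ₂ p b * pd ν (fun q => ξ₃ q c) p) := by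
    intro μ ν
    calc pd ν (fun q => ∑ a, ∑ b, ∑ c, symB B q a b c μ * ξ₁ q a * ξ₂ q b * ξ₃ q c) p
        = ∑ a, pd ν (fun q => ∑ b, ∑ c, symB B q a b c μ * ξ₁ q a * ξ₂ q b * ξ₃ q c) p :=
          pd_sum _ _ _ _ (fun a _ => DifferentiableAt.fun_sum fun b _ =>
            DifferentiableAt.fun_sum fun c _ => htermd a b c μ)
      _ = ∑ a, ∑ b, pd ν (fun q => ∑ c, symB B q a b c μ * ξ₁ q a * ξ₂ q b * ξ₃ q c) p :=
          Finset.sum_congr rfl fun a _ =>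
            pd_sum _ _ _ _ (fun b _ => DifferentiableAt.fun_sum fun c _ => htermd a b c μ)
      _ = ∑ a, ∑ b, ∑ c, pd ν (fun q => symB B q a b c μ * ξ₁ q a * ξ₂ q b * ξ₃ q c) p :=
          Finset.sum_congr rfl fun a _ => Finset.sum_congr rfl fun b _ =>
            pd_sum _ _ _ _ (fun c _ => htermd a b c μ)
      _ = _ :=
          Finset.sum_congr rfl fun a _ => Finset.sum_congr rfl fun b _ =>
            Finset.sum_congr rfl fun c _ =>
              pd_mul4 _ _ _ _ _ _ (hsymBd a b c μ p) (hξ₁d a p) (hξ₂d b p) (hξ₃d c p)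
  simp only [symB_def]
  simp only [mink_diag_sum]
  simp only [hcur]
  simp only [hpd]
  simp only [Finset.mul_sum, mul_add, Finset.sum_add_distrib]
  have hT1 : (∑ μ, ∑ a, ∑ b, ∑ c,
        mink μ μ * (pd μ (fun q => symB B q a b c μ) p * ξ₁ p a * ξ₂ p b * ξ₃ p c))
      = ∑ a, ∑ b, ∑ c,
          (∑ μ, mink μ μ * pd μ (fun q => symB B q a b c μ) p) * ξ₁ p a * ξ₂ p b * ξ₃ p c := by
    calc (∑ μ, ∑ a, ∑ b, ∑ c,
          mink μ μ * (pd μ (fun q => symB B q a b c μ) p * ξ₁ p a * ξ₂ p b * ξ₃ p c))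
        = ∑ a, ∑ b, ∑ c, ∑ μ,
            mink μ μ * (pd μ (fun q => symB B q a b c μ) p * ξ₁ p a * ξ₂ p b * ξ₃ p c) :=
          sum_comm4 _
      _ = _ := by
          refine Finset.sum_congr rfl fun a _ => Finset.sum_congr rfl fun b _ =>
            Finset.sum_congr rfl fun c _ => ?_
          rw [Finset.sum_mul, Finset.sum_mul, Finset.sum_mul]
          exact Finset.sum_congr rfl fun μ _ => by ring
  have hT2 : (∑ μ, ∑ a, ∑ b, ∑ c,
        mink μ μ * (symB B p a b c μ * pd μ (fun q => ξ₁ q a) p * ξ₂ p b * ξ₃ p c)) = 0 := by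
    calc (∑ μ, ∑ a, ∑ b, ∑ c,
          mink μ μ * (symB B p a b c μ * pd μ (fun q => ξ₁ q a) p * ξ₂ p b * ξ₃ p c))
        = ∑ μ, ∑ a, mink μ μ * (∑ b, ∑ c, symB B p a b c μ * ξ₂ p b * ξ₃ p c)
            * pd μ (fun q => ξ₁ q a) p := by
          refine Finset.sum_congr rfl fun μ _ => Finset.sum_congr rfl fun a _ => ?_
          simp only [Finset.mul_sum, Finset.sum_mul]
          exact Finset.sum_congr rfl fun b _ => Finset.sum_congr rfl fun c _ => by ring
      _ = 0 := killing_cancel _ _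
          (fun m a => Finset.sum_congr rfl fun b _ => Finset.sum_congr rfl fun c _ => by
            rw [symB_swap03 B p m b c a])
          hA₁
  have hT3 : (∑ μ, ∑ a, ∑ b, ∑ c,
        mink μ μ * (symB B p a b c μ * ξ₁ p a * pd μ (fun q => ξ₂ q b) p * ξ₃ p c)) = 0 := by
    calc (∑ μ, ∑ a, ∑ b, ∑ c,
          mink μ μ * (symB B p a b c μ * ξ₁ p a * pd μ (fun q => ξ₂ q b) p * ξ₃ p c))
        = ∑ μ, ∑ b, ∑ a, ∑ c,
            mink μ μ * (symB B p a b c μ * ξ₁ p a * pd μ (fun q => ξ₂ q b) p * ξ₃ p c) :=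
          Finset.sum_congr rfl fun μ _ => Finset.sum_comm
      _ = ∑ μ, ∑ b, mink μ μ * (∑ a, ∑ c, symB B p a b c μ * ξ₁ p a * ξ₃ p c)
            * pd μ (fun q => ξ₂ q b) p := by
          refine Finset.sum_congr rfl fun μ _ => Finset.sum_congr rfl fun b _ => ?_
          simp only [Finset.mul_sum, Finset.sum_mul]
          exact Finset.sum_congr rfl fun a _ => Finset.sum_congr rfl fun c _ => by ring
      _ = 0 := killing_cancel _ _
          (fun m b => Finset.sum_congr rfl fun a _ => Finset.sum_congr rfl fun c _ => by
            rw [symB_swap13 B p a m c b])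
          hA₂
  have hT4 : (∑ μ, ∑ a, ∑ b, ∑ c,
        mink μ μ * (symB B p a b c μ * ξ₁ p a * ξ₂ p b * pd μ (fun q => ξ₃ q c) p)) = 0 := by
    calc (∑ μ, ∑ a, ∑ b, ∑ c,
          mink μ μ * (symB B p a b c μ * ξ₁ p a * ξ₂ p b * pd μ (fun q => ξ₃ q c) p))
        = ∑ μ, ∑ c, ∑ a, ∑ b,
            mink μ μ * (symB B p a b c μ * ξ₁ p a * ξ₂ p b * pd μ (fun q => ξ₃ q c) p) :=
          Finset.sum_congr rfl fun μ _ => sum_rot3 _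
      _ = ∑ μ, ∑ c, mink μ μ * (∑ a, ∑ b, symB B p a b c μ * ξ₁ p a * ξ₂ p b)
            * pd μ (fun q => ξ₃ q c) p := by
          refine Finset.sum_congr rfl fun μ _ => Finset.sum_congr rfl fun c _ => ?_
          simp only [Finset.mul_sum, Finset.sum_mul]
          exact Finset.sum_congr rfl fun a _ => Finset.sum_congr rfl fun b _ => by ring
      _ = 0 := killing_cancel _ _
          (fun m c => Finset.sum_congr rfl fun a _ => Finset.sum_congr rfl fun b _ => by
            rw [symB_swap23 B p a b m c])
          hA₃
  rw [hT1, hT2, hT3, hT4]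
  ring
end
end
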